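/- Under Assumptions 1–3, 4(i),(ii), Assumption 5' (additive treatments), and the dominance condition O ≥ M almost surely, the average treatment effect is identified as ATE_O(t) = τ · (M̃⁺−M̃⁻)/(Õ⁺−Õ⁻), where τ is the fuzzy difference-in-discontinuities estimand. -/

import Mathlib

/-!
Dominance makes `O * M = M` almost surely, so the first stage of the fuzzy design has the jump of
`M` in place of that of `T`. Near the cutoff the young-cohort outcome is an affine function of
the treatment shares with coefficients continuous at `t`, so its jump is
`ΔM · (Ỹ(1,1) − Ỹ(1,0)) + ΔO · (Ỹ(1,0) − Ỹ(0,0))`, while the old-cohort Wald ratio is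
`Ȳ(1) − Ȳ(0) = Ỹ(0,1) − Ỹ(0,0)`. By additivity the latter is the first coefficient, so `τ`
leaves `ΔO / ΔM · (Ỹ(1,0) − Ỹ(0,0))`, and rescaling by `ΔM / ΔO` gives the effect.
-/

open MeasureTheory Filter Topology

theorem integral_mul_eq_integral_of_ae_le {Ω : Type*} [MeasurableSpace Ω] {ν : Measure Ω}
    {O M : Ω → ℝ} (hO : ∀ ω, O ω = 0 ∨ O ω = 1) (hM : ∀ ω, M ω = 0 ∨ M ω = 1)
    (hle : ∀ᵐ ω ∂ν, M ω ≤ O ω) :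
    ∫ ω, O ω * M ω ∂ν = ∫ ω, M ω ∂ν := by
  refine integral_congr_ae ?_
  filter_upwards [hle] with ω hω
  rcases hM ω with hm | hm
  · simp [hm]
  · have ho : O ω = 1 := (hO ω).resolve_left fun ho => by linarith
    simp [hm, ho]

section Jump

variable {ι : Type*} [Fintype ι] {a f : ℝ → ℝ} {p b : ι → ℝ → ℝ} {t : ℝ}

theorem tendsto_add_sum_mul_of_continuousAt {l : Filter ℝ} (hl : l ≤ 𝓝 t)
    (ha : ContinuousAt a t) (hb : ∀ i, ContinuousAt (b i) t) {P : ι → ℝ}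
    (hp : ∀ i, Tendsto (p i) l (𝓝 (P i))) :
    Tendsto (fun x => a x + ∑ i, p i x * b i x) l (𝓝 (a t + ∑ i, P i * b i t)) :=
  (ha.tendsto.mono_left hl).add <|
    tendsto_finsetSum _ fun i _ => (hp i).mul ((hb i).tendsto.mono_left hl)

theorem jump_eq_sum_mul_of_continuousAt (ha : ContinuousAt a t)
    (hb : ∀ i, ContinuousAt (b i) t) (hf : ∀ x, f x = a x + ∑ i, p i x * b i x)
    {Fp Fm : ℝ} {Pp Pm : ι → ℝ}
    (hfp : Tendsto f (𝓝[>] t) (𝓝 Fp)) (hfm : Tendsto f (𝓝[<] t) (𝓝 Fm))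
    (hpp : ∀ i, Tendsto (p i) (𝓝[>] t) (𝓝 (Pp i)))
    (hpm : ∀ i, Tendsto (p i) (𝓝[<] t) (𝓝 (Pm i))) :
    Fp - Fm = ∑ i, (Pp i - Pm i) * b i t := by
  have hf' : f = fun x => a x + ∑ i, p i x * b i x := funext hf
  have hp := tendsto_nhds_unique hfp (hf' ▸ tendsto_add_sum_mul_of_continuousAt
    nhdsWithin_le_nhds ha hb hpp)
  have hm := tendsto_nhds_unique hfm (hf' ▸ tendsto_add_sum_mul_of_continuousAt
    nhdsWithin_le_nhds ha hb hpm)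
  simp only [hp, hm, sub_mul, Finset.sum_sub_distrib, add_sub_add_left_eq_sub]

end Jump

theorem jump_eq_mul_of_continuousAt {a b p f : ℝ → ℝ} {t Fp Fm Pp Pm : ℝ}
    (ha : ContinuousAt a t) (hb : ContinuousAt b t) (hf : ∀ x, f x = a x + p x * b x)
    (hfp : Tendsto f (𝓝[>] t) (𝓝 Fp)) (hfm : Tendsto f (𝓝[<] t) (𝓝 Fm))
    (hpp : Tendsto p (𝓝[>] t) (𝓝 Pp)) (hpm : Tendsto p (𝓝[<] t) (𝓝 Pm)) :
    Fp - Fm = (Pp - Pm) * b t := by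
  simpa using jump_eq_sum_mul_of_continuousAt (ι := Unit) (p := fun _ => p) (b := fun _ => b)
    (Pp := fun _ => Pp) (Pm := fun _ => Pm) ha (fun _ => hb) (by simpa using hf) hfp hfm
    (fun _ => hpp) (fun _ => hpm)

theorem wald_sub_wald_mul_div_eq {K : Type*} [Field K] {ΔY ΔM ΔO ΔYb ΔMb β γ : K}
    (hM : ΔM ≠ 0) (hO : ΔO ≠ 0) (hMb : ΔMb ≠ 0)
    (hY : ΔY = ΔM * γ + ΔO * β) (hYb : ΔYb = ΔMb * γ) :
    (ΔY / ΔM - ΔYb / ΔMb) * (ΔM / ΔO) = β := by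
  subst hY hYb
  field_simp
  ring

theorem ate_additive_dominance_identification_general
    {Ω : Type*} [MeasurableSpace Ω]
    (μ : Measure Ω)
    (ν : ℝ → Measure Ω)
    (hν : ∀ x, ν x ≪ μ)
    (O M : Ω → ℝ)
    (hO01 : ∀ ω, O ω = 0 ∨ O ω = 1) (hM01 : ∀ ω, M ω = 0 ∨ M ω = 1)
    -- dominance
    (hdom : ∀ᵐ ω ∂μ, M ω ≤ O ω)
    (t : ℝ)
    (y11 y10 y01 y00 z1 z0 : ℝ → ℝ)
    (EY EO EM ET EYb EMb : ℝ → ℝ)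
    (hEM : ∀ x, EM x = ∫ ω, M ω ∂(ν x))
    (hET : ∀ x, ET x = ∫ ω, O ω * M ω ∂(ν x))
    -- Assumption 1
    (h11 : ContinuousAt y11 t) (h10 : ContinuousAt y10 t)
    (h00 : ContinuousAt y00 t)
    (hz1 : ContinuousAt z1 t) (hz0 : ContinuousAt z0 t)
    -- Assumption 2 (switching identities)
    (hY : ∀ x, EY x = y00 x + EM x * (y01 x - y00 x) + EO x * (y10 x - y00 x)
        + ET x * (y11 x - y10 x - y01 x + y00 x))
    (hYb : ∀ x, EYb x = z0 x + EMb x * (z1 x - z0 x))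
    -- Assumption 3
    (hA3 : z1 t - z0 t = y01 t - y00 t)
    -- Assumption 4 (i), (ii)
    (Op Om Mp Mm Tp Tm Yp Ym Mbp Mbm Ybp Ybm : ℝ)
    (hOp : Tendsto EO (𝓝[>] t) (𝓝 Op)) (hOm : Tendsto EO (𝓝[<] t) (𝓝 Om))
    (hMp : Tendsto EM (𝓝[>] t) (𝓝 Mp)) (hMm : Tendsto EM (𝓝[<] t) (𝓝 Mm))
    (hTp : Tendsto ET (𝓝[>] t) (𝓝 Tp)) (hTm : Tendsto ET (𝓝[<] t) (𝓝 Tm))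
    (hYp : Tendsto EY (𝓝[>] t) (𝓝 Yp)) (hYm : Tendsto EY (𝓝[<] t) (𝓝 Ym))
    (hMbp : Tendsto EMb (𝓝[>] t) (𝓝 Mbp)) (hMbm : Tendsto EMb (𝓝[<] t) (𝓝 Mbm))
    (hYbp : Tendsto EYb (𝓝[>] t) (𝓝 Ybp)) (hYbm : Tendsto EYb (𝓝[<] t) (𝓝 Ybm))
    (hOne : Op ≠ Om) (hTne : Tp ≠ Tm) (hMbne : Mbp ≠ Mbm)
    -- Assumption 5': additivity
    (hA5' : y11 t - y01 t = y10 t - y00 t) :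
    y11 t - y01 t
      = ((Yp - Ym) / (Tp - Tm) - (Ybp - Ybm) / (Mbp - Mbm)) * ((Mp - Mm) / (Op - Om)) := by
  have hTM : ET = EM := funext fun x => by
    rw [hET, hEM, integral_mul_eq_integral_of_ae_le hO01 hM01 ((hν x).ae_le hdom)]
  rw [hTM] at hTp hTm hY
  rw [tendsto_nhds_unique hTp hMp, tendsto_nhds_unique hTm hMm] at hTne ⊢
  have hYjump : Yp - Ym = (Mp - Mm) * (y11 t - y10 t) + (Op - Om) * (y10 t - y00 t) := by
    simpa [Fin.sum_univ_two] using jump_eq_sum_mul_of_continuousAt (p := ![EM, EO])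
      (b := ![fun x => y11 x - y10 x, fun x => y10 x - y00 x]) (Pp := ![Mp, Op])
      (Pm := ![Mm, Om]) h00 (Fin.forall_fin_two.2 ⟨h11.sub h10, h10.sub h00⟩)
      (fun x => by
        simp only [hY, Fin.sum_univ_two, Matrix.cons_val_zero, Matrix.cons_val_one]; ring) hYp hYm
      (Fin.forall_fin_two.2 ⟨hMp, hOp⟩) (Fin.forall_fin_two.2 ⟨hMm, hOm⟩)
  have hYbjump := jump_eq_mul_of_continuousAt hz0 (hz1.sub hz0) hYb hYbp hYbm hMbp hMbm
  rw [hA5', wald_sub_wald_mul_div_eq (sub_ne_zero.2 hTne) (sub_ne_zero.2 hOne)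
    (sub_ne_zero.2 hMbne) hYjump (by rw [hYbjump, Pi.sub_apply, hA3]; congr 1; linarith)]

/-- Theorem 3b: Under Assumptions 1–3, 4(i),(ii), Assumption 5' (additive
treatments: `Ỹ(1,1)−Ỹ(0,1) = Ỹ(1,0)−Ỹ(0,0)`) and the dominance condition `O ≥ M` a.s., the
average treatment effect is identified as `ATE_O(t) = τ · (M̃⁺−M̃⁻)/(Õ⁺−Õ⁻)`, where
`τ = (Ỹ⁺−Ỹ⁻)/(T̃⁺−T̃⁻) − (Ȳ⁺−Ȳ⁻)/(M̄⁺−M̄⁻)` is the fuzzy difference-in-discontinuities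
estimand.  Conditioning on `X = x` in the young cohort is modeled via conditional laws `ν x ≪ μ`. -/
theorem ate_additive_dominance_identification
    {Ω : Type*} [MeasurableSpace Ω]
    (μ : Measure Ω) [IsProbabilityMeasure μ]
    (ν : ℝ → Measure Ω) [∀ x, IsProbabilityMeasure (ν x)]
    (hν : ∀ x, ν x ≪ μ)
    (O M : Ω → ℝ) (hOmeas : Measurable O) (hMmeas : Measurable M)
    (hO01 : ∀ ω, O ω = 0 ∨ O ω = 1) (hM01 : ∀ ω, M ω = 0 ∨ M ω = 1)
    -- dominance
    (hdom : ∀ᵐ ω ∂μ, M ω ≤ O ω)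
    (t : ℝ)
    (y11 y10 y01 y00 z1 z0 : ℝ → ℝ)
    (EY EO EM ET EYb EMb : ℝ → ℝ)
    (hEO : ∀ x, EO x = ∫ ω, O ω ∂(ν x))
    (hEM : ∀ x, EM x = ∫ ω, M ω ∂(ν x))
    (hET : ∀ x, ET x = ∫ ω, O ω * M ω ∂(ν x))
    -- Assumption 1
    (h11 : ContinuousAt y11 t) (h10 : ContinuousAt y10 t)
    (h01 : ContinuousAt y01 t) (h00 : ContinuousAt y00 t)
    (hz1 : ContinuousAt z1 t) (hz0 : ContinuousAt z0 t)
    -- Assumption 2 (switching identities)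
    (hY : ∀ x, EY x = y00 x + EM x * (y01 x - y00 x) + EO x * (y10 x - y00 x)
        + ET x * (y11 x - y10 x - y01 x + y00 x))
    (hYb : ∀ x, EYb x = z0 x + EMb x * (z1 x - z0 x))
    -- Assumption 3
    (hA3 : z1 t - z0 t = y01 t - y00 t)
    -- Assumption 4 (i), (ii)
    (Op Om Mp Mm Tp Tm Yp Ym Mbp Mbm Ybp Ybm : ℝ)
    (hOp : Tendsto EO (𝓝[>] t) (𝓝 Op)) (hOm : Tendsto EO (𝓝[<] t) (𝓝 Om))
    (hMp : Tendsto EM (𝓝[>] t) (𝓝 Mp)) (hMm : Tendsto EM (𝓝[<] t) (𝓝 Mm))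
    (hTp : Tendsto ET (𝓝[>] t) (𝓝 Tp)) (hTm : Tendsto ET (𝓝[<] t) (𝓝 Tm))
    (hYp : Tendsto EY (𝓝[>] t) (𝓝 Yp)) (hYm : Tendsto EY (𝓝[<] t) (𝓝 Ym))
    (hMbp : Tendsto EMb (𝓝[>] t) (𝓝 Mbp)) (hMbm : Tendsto EMb (𝓝[<] t) (𝓝 Mbm))
    (hYbp : Tendsto EYb (𝓝[>] t) (𝓝 Ybp)) (hYbm : Tendsto EYb (𝓝[<] t) (𝓝 Ybm))
    (hOne : Op ≠ Om) (hTne : Tp ≠ Tm) (hMbne : Mbp ≠ Mbm)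
    -- Assumption 5': additivity
    (hA5' : y11 t - y01 t = y10 t - y00 t) :
    y11 t - y01 t
      = ((Yp - Ym) / (Tp - Tm) - (Ybp - Ybm) / (Mbp - Mbm)) * ((Mp - Mm) / (Op - Om)) :=
  ate_additive_dominance_identification_general μ ν hν O M hO01 hM01 hdom t y11 y10 y01 y00 z1 z0 EY
    EO EM ET EYb EMb hEM hET h11 h10 h00 hz1 hz0 hY hYb hA3 Op Om Mp Mm Tp Tm Yp Ym Mbp Mbm Ybp Ybm
    hOp hOm hMp hMm hTp hTm hYp hYm hMbp hMbm hYbp hYbm hOne hTne hMbne hA5'
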